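/- Let G ⊂ W(D_n) act on Pic = Z^{n+2} via Φ, and suppose ξ = (1/2)Σ_{i∈I} f_i lies in Z^1(G, Pic) for some index set I ⊆ {−1,1,...,n} and represents a nonzero class in H^1(G, Pic). Then −1 ∉ I. -/

import Mathlib

/-- The global sign flip on all `2n` symbols. -/
def flipPerm (n : ℕ) : Equiv.Perm (Fin n × Bool) :=
  Equiv.prodCongr (Equiv.refl (Fin n)) (Equiv.swap true false)

/-- `W(B_n)`, realized as the group of permutations of the `2n` symbols
`j^±` commuting with the simultaneous sign flip. -/
def WBgroup (n : ℕ) : Subgroup (Equiv.Perm (Fin n × Bool)) :=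
  Subgroup.centralizer {flipPerm n}

/-- The number `t` of sign changes of a signed permutation `g = c_{j_1}⋯c_{j_t}·τ`. -/
def flipCount {n : ℕ} (g : Equiv.Perm (Fin n × Bool)) : ℕ :=
  (Finset.univ.filter fun j : Fin n => (g (j, true)).2 = false).card

/-- The conic-bundle representation `Φ` of `W(D_n)` on `Pic = ℤ^{n+2}`, written blockwise
on indices `Fin 2 ⊕ Fin n` (where `inl 0 = l₋₁`, `inl 1 = l₀`, `inr i = l_i`): the
lower-right block is the signed permutation matrix `Ψ(g)`, the row-`l₀` entries over
column `l_i` are `b'(i) = 1` exactly when the nonzero entry of column `i` of `Ψ(g)` is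
`-1`, the column-`l₋₁` entries in row `l_i` are `c'(i) = -1` exactly when the nonzero
entry of row `i` of `Ψ(g)` is `-1`, and the upper-left block is `[[1,0],[t/2,1]]`. -/
def PhiP {n : ℕ} (g : Equiv.Perm (Fin n × Bool)) :
    Matrix (Fin 2 ⊕ Fin n) (Fin 2 ⊕ Fin n) ℤ :=
  Matrix.of fun r c =>
    match r, c with
    | Sum.inl r', Sum.inl c' =>
        if r' = 0 then (if c' = 0 then 1 else 0)
        else if c' = 0 then ((flipCount g / 2 : ℕ) : ℤ) else 1
    | Sum.inl r', Sum.inr i =>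
        if r' = 0 then 0 else if (g⁻¹ (i, true)).2 = false then 1 else 0
    | Sum.inr i, Sum.inl c' =>
        if c' = 0 then (if (g (i, true)).2 = false then -1 else 0) else 0
    | Sum.inr i, Sum.inr j =>
        if j = (g (i, true)).1 then (if (g (i, true)).2 = false then -1 else 1) else 0

/-- The action of `Φ(g)` on `Pic = ℤ^{n+2}` as a linear map. -/
def PhiL {n : ℕ} (g : Equiv.Perm (Fin n × Bool)) :
    ((Fin 2 ⊕ Fin n) → ℤ) →ₗ[ℤ] ((Fin 2 ⊕ Fin n) → ℤ) :=
  (PhiP g).mulVecLin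

/-- The orbit of an index `j` under the underlying permutation `pr(g)` of `g`. -/
def orbitOf {n : ℕ} (g : Equiv.Perm (Fin n × Bool)) (j : Fin n) : Set (Fin n) :=
  {i | ∃ k : ℕ, ((g ^ k) (j, true)).1 = i}

/-- The signed permutation cycle of `g` through `j` has an odd number of minus signs. -/
def oddOrbitAt {n : ℕ} (g : Equiv.Perm (Fin n × Bool)) (j : Fin n) : Prop :=
  Odd (Set.ncard {i | i ∈ orbitOf g j ∧ (g (i, true)).2 = false})

/-- `Λ(g)`: the number of signed permutation cycles `β` of `g` with `σ(β) = -1`. -/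
noncomputable def Lambda {n : ℕ} (g : Equiv.Perm (Fin n × Bool)) : ℕ :=
  Set.ncard {O : Set (Fin n) | ∃ j : Fin n, O = orbitOf g j ∧ oddOrbitAt g j}

/-- The standard basis vector `e_idx` of `Pic = ℤ^{n+2}`. -/
def stdBasis {n : ℕ} (idx : Fin 2 ⊕ Fin n) : (Fin 2 ⊕ Fin n) → ℤ :=
  fun r => if r = idx then 1 else 0

/-- The principal cocycle `f_idx : g ↦ (Φ(g) - I)·e_idx` on a subgroup `G`. -/
def Fcoc {n : ℕ} (G : Subgroup (Equiv.Perm (Fin n × Bool))) (idx : Fin 2 ⊕ Fin n) :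
    G → ((Fin 2 ⊕ Fin n) → ℤ) :=
  fun g => PhiL (g : Equiv.Perm (Fin n × Bool)) (stdBasis idx) - stdBasis idx

lemma flip_apply {n : ℕ} (x : Fin n × Bool) : flipPerm n x = (x.1, !x.2) := by
  obtain ⟨i, b⟩ := x; cases b <;> simp [flipPerm]

lemma comm_flip {n : ℕ} {g : Equiv.Perm (Fin n × Bool)} (hg : g ∈ WBgroup n)
    (i : Fin n) (b : Bool) : g (i, !b) = ((g (i, b)).1, !(g (i, b)).2) := by
  have h := (Subgroup.mem_centralizer_iff.mp hg) (flipPerm n) (by simp)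
  have := congrArg (fun p => p (i, b)) h
  simp only [Equiv.Perm.mul_apply] at this
  rw [flip_apply (g (i,b))] at this
  rw [this, flip_apply]

lemma g_inv_fst {n : ℕ} {g : Equiv.Perm (Fin n × Bool)} (hg : g ∈ WBgroup n)
    (j : Fin n) : g ((g⁻¹ (j, true)).1, true) = (j, (g⁻¹ (j, true)).2) := by
  rcases hx : g⁻¹ (j, true) with ⟨i₀, b⟩
  have hgx : g (i₀, b) = (j, true) := by
    rw [← hx]; exact Equiv.apply_symm_apply g _
  cases b
  · have := comm_flip hg i₀ false
    rw [hgx] at this; simpa using this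
  · simpa using hgx

lemma fst_eq_iff {n : ℕ} {g : Equiv.Perm (Fin n × Bool)} (hg : g ∈ WBgroup n)
    (j i : Fin n) : (g (i, true)).1 = j ↔ i = (g⁻¹ (j, true)).1 := by
  constructor
  · intro h
    rcases hc : g (i, true) with ⟨j', c⟩
    have hj' : j = j' := by rw [← h, hc]
    subst hj'
    have hb := g_inv_fst hg j
    by_cases hcb : c = (g⁻¹ (j, true)).2
    · have : g (i, true) = g ((g⁻¹ (j, true)).1, true) := by rw [hc, hb, hcb]
      exact (Prod.mk.injEq _ _ _ _).mp (g.injective this) |>.1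
    · exfalso
      have h2 : g (i, false) = (j, !c) := by
        have := comm_flip hg i true
        rw [hc] at this; simpa using this
      have hcb' : (!c) = (g⁻¹ (j, true)).2 := by
        cases c <;> cases hcc : (g⁻¹ (j, true)).2 <;> simp_all
      have : g (i, false) = g ((g⁻¹ (j, true)).1, true) := by rw [h2, hb, hcb']
      have := g.injective this
      simp at this
  · rintro rfl
    rw [g_inv_fst hg j]

lemma PhiL_std {n : ℕ} (g : Equiv.Perm (Fin n × Bool)) (idx r : Fin 2 ⊕ Fin n) :
    PhiL g (stdBasis idx) r = PhiP g r idx := by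
  simp [PhiL, Matrix.mulVecLin, Matrix.mulVec, dotProduct, stdBasis, mul_ite]

lemma Fcoc_apply {n : ℕ} (G : Subgroup (Equiv.Perm (Fin n × Bool)))
    (idx : Fin 2 ⊕ Fin n) (a : G) (r : Fin 2 ⊕ Fin n) :
    Fcoc G idx a r = PhiP (a : Equiv.Perm (Fin n × Bool)) r idx - stdBasis idx r := by
  simp [Fcoc, PhiL_std]

lemma fcoc_inr_term {n : ℕ} (G : Subgroup (Equiv.Perm (Fin n × Bool))) (a : G)
    (j i : Fin n) :
    Fcoc G (Sum.inr j) a (Sum.inr i)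
      = (if (Sum.inr j : Fin 2 ⊕ Fin n) = Sum.inr (((a : Equiv.Perm (Fin n × Bool)) (i, true)).1)
          then (if ((a : Equiv.Perm (Fin n × Bool)) (i, true)).2 = false then -1 else 1) else 0)
        - (if (Sum.inr j : Fin 2 ⊕ Fin n) = Sum.inr i then 1 else 0) := by
  rw [Fcoc_apply]
  simp only [PhiP, Matrix.of_apply, stdBasis, Sum.inr.injEq]
  congr 1
  by_cases h : j = i <;> simp [h, eq_comm]

lemma sum_I'_inr {n : ℕ} (G : Subgroup (Equiv.Perm (Fin n × Bool))) (a : G)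
    (I' : Finset (Fin 2 ⊕ Fin n))
    (hmem : ∀ i' ∈ I', ∃ j : Fin n, i' = Sum.inr j) (i : Fin n) :
    ∑ i' ∈ I', Fcoc G i' a (Sum.inr i)
      = (if Sum.inr (((a : Equiv.Perm (Fin n × Bool)) (i, true)).1) ∈ I'
          then (if ((a : Equiv.Perm (Fin n × Bool)) (i, true)).2 = false then -1 else 1) else 0)
        - (if Sum.inr i ∈ I' then 1 else 0) := by
  have h : ∀ i' ∈ I', Fcoc G i' a (Sum.inr i)
      = (if i' = Sum.inr (((a : Equiv.Perm (Fin n × Bool)) (i, true)).1)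
          then (if ((a : Equiv.Perm (Fin n × Bool)) (i, true)).2 = false then -1 else 1) else 0)
        - (if i' = Sum.inr i then 1 else 0) := by
    intro i' hi'
    obtain ⟨j, rfl⟩ := hmem i' hi'
    exact fcoc_inr_term G a j i
  rw [Finset.sum_congr rfl h, Finset.sum_sub_distrib, Finset.sum_ite_eq', Finset.sum_ite_eq']

lemma fcoc_inl0_inr {n : ℕ} (G : Subgroup (Equiv.Perm (Fin n × Bool))) (a : G) (i : Fin n) :
    Fcoc G (Sum.inl 0) a (Sum.inr i)
      = (if ((a : Equiv.Perm (Fin n × Bool)) (i, true)).2 = false then -1 else 0) := by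
  rw [Fcoc_apply]; simp [PhiP, stdBasis]

lemma fcoc_inr_inl1 {n : ℕ} (G : Subgroup (Equiv.Perm (Fin n × Bool))) (a : G) (j : Fin n) :
    Fcoc G (Sum.inr j) a (Sum.inl 1)
      = (if ((a : Equiv.Perm (Fin n × Bool))⁻¹ (j, true)).2 = false then 1 else 0) := by
  rw [Fcoc_apply]; simp [PhiP, stdBasis]

lemma fcoc_inl0_inl1 {n : ℕ} (G : Subgroup (Equiv.Perm (Fin n × Bool))) (a : G) :
    Fcoc G (Sum.inl 0) a (Sum.inl 1)
      = ((flipCount (a : Equiv.Perm (Fin n × Bool)) / 2 : ℕ) : ℤ) := by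
  rw [Fcoc_apply]; simp [PhiP, stdBasis]

lemma sum_fcoc_inl0_inr {n : ℕ} (G : Subgroup (Equiv.Perm (Fin n × Bool))) (a : G) :
    ∑ i : Fin n, Fcoc G (Sum.inl 0) a (Sum.inr i)
      = -(flipCount (a : Equiv.Perm (Fin n × Bool)) : ℤ) := by
  simp only [fcoc_inl0_inr]
  rw [Finset.sum_ite, Finset.sum_const, Finset.sum_const]
  simp [flipCount]

lemma sum_inr_col {n : ℕ} {g : Equiv.Perm (Fin n × Bool)} (hg : g ∈ WBgroup n) (j : Fin n) :
    ∑ i : Fin n,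
      ((if (Sum.inr j : Fin 2 ⊕ Fin n) = Sum.inr ((g (i, true)).1)
          then (if (g (i, true)).2 = false then (-1 : ℤ) else 1) else 0)
        - (if (Sum.inr j : Fin 2 ⊕ Fin n) = Sum.inr i then 1 else 0))
      = (if (g⁻¹ (j, true)).2 = false then (-1 : ℤ) else 1) - 1 := by
  rw [Finset.sum_sub_distrib]
  congr 1
  · have h : ∀ i : Fin n,
        (if (Sum.inr j : Fin 2 ⊕ Fin n) = Sum.inr ((g (i, true)).1)
          then (if (g (i, true)).2 = false then (-1 : ℤ) else 1) else 0)
        = (if i = (g⁻¹ (j, true)).1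
            then (if (g⁻¹ (j, true)).2 = false then (-1 : ℤ) else 1) else 0) := by
      intro i
      by_cases hi : i = (g⁻¹ (j, true)).1
      · subst hi
        rw [if_pos rfl, if_pos]
        · rw [g_inv_fst hg j]
        · rw [g_inv_fst hg j]
      · rw [if_neg hi, if_neg]
        intro hc
        exact hi ((fst_eq_iff hg j i).mp (Sum.inr.inj hc).symm)
    rw [Finset.sum_congr rfl (fun i _ => h i), Finset.sum_ite_eq']
    simp
  · simp only [Sum.inr.injEq]
    rw [Finset.sum_ite_eq]
    simp

/-- If `ξ = (1/2)·Σ_{i∈I} f_i` is a `1`-cocycle of `G ⊆ W(D_n)` with values in `Pic`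
(`I ⊆ {-1,1,…,n}`, i.e. the index `0 = l₀` is excluded) representing a *nonzero* class
in `H¹(G, Pic)` (it is not a coboundary), then `-1 ∉ I`. -/
theorem stmt15 {n : ℕ} (G : Subgroup (Equiv.Perm (Fin n × Bool)))
    (hG : G ≤ WBgroup n)
    (hD : ∀ g ∈ G, Even (flipCount g))
    (I : Finset (Fin 2 ⊕ Fin n)) (hI : Sum.inl 1 ∉ I)
    (ξ : G → ((Fin 2 ⊕ Fin n) → ℤ))
    (hcoc : ∀ a b : G, ξ (a * b) = ξ a + PhiL (a : Equiv.Perm (Fin n × Bool)) (ξ b))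
    (hhalf : ∀ a : G, (2 : ℤ) • ξ a = ∑ i ∈ I, Fcoc G i a)
    (hnz : ¬ ∃ v, ∀ a : G, ξ a = PhiL (a : Equiv.Perm (Fin n × Bool)) v - v) :
    Sum.inl 0 ∉ I := by
  intro h0
  classical
  apply hnz
  set I' : Finset (Fin 2 ⊕ Fin n) := I.erase (Sum.inl 0) with hI'def
  have hmem : ∀ i' ∈ I', ∃ j : Fin n, i' = Sum.inr j := by
    intro i' hi'
    rcases i' with (c | j)
    · exfalso
      have hne := (Finset.mem_erase.mp hi').1
      have hmemI := (Finset.mem_erase.mp hi').2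
      fin_cases c
      · exact hne rfl
      · exact hI hmemI
    · exact ⟨j, rfl⟩
  refine ⟨∑ i' ∈ I', stdBasis i', fun a => ?_⟩
  have hg : (a : Equiv.Perm (Fin n × Bool)) ∈ WBgroup n := hG a.2
  have hsum : ∀ r, 2 * ξ a r = Fcoc G (Sum.inl 0) a r + ∑ i' ∈ I', Fcoc G i' a r := by
    intro r
    have h := congrFun (hhalf a) r
    rw [Pi.smul_apply, smul_eq_mul] at h
    rw [h, Finset.sum_apply, ← Finset.sum_erase_add I _ h0]
    rw [add_comm]
  have hrow : ∀ i : Fin n,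
      Fcoc G (Sum.inl 0) a (Sum.inr i) = ∑ i' ∈ I', Fcoc G i' a (Sum.inr i) := by
    intro i
    have hp := hsum (Sum.inr i)
    rw [sum_I'_inr G a I' hmem i, fcoc_inl0_inr] at hp
    rw [sum_I'_inr G a I' hmem i, fcoc_inl0_inr]
    split_ifs at hp ⊢ <;> omega
  have hrow1 : Fcoc G (Sum.inl 0) a (Sum.inl 1) = ∑ i' ∈ I', Fcoc G i' a (Sum.inl 1) := by
    set S1 : ℤ := ∑ i' ∈ I', Fcoc G i' a (Sum.inl 1) with hS1
    have hA : ∑ i : Fin n, Fcoc G (Sum.inl 0) a (Sum.inr i)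
        = -(flipCount (a : Equiv.Perm (Fin n × Bool)) : ℤ) := sum_fcoc_inl0_inr G a
    have hB : ∑ i : Fin n, ∑ i' ∈ I', Fcoc G i' a (Sum.inr i) = -2 * S1 := by
      rw [Finset.sum_comm, hS1, Finset.mul_sum]
      apply Finset.sum_congr rfl
      intro i' hi'
      obtain ⟨j, rfl⟩ := hmem i' hi'
      rw [Finset.sum_congr rfl (fun i _ => fcoc_inr_term G a j i), sum_inr_col hg j,
        fcoc_inr_inl1]
      split_ifs <;> ring
    have hAB : -(flipCount (a : Equiv.Perm (Fin n × Bool)) : ℤ) = -2 * S1 := by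
      rw [← hA, ← hB]
      exact Finset.sum_congr rfl (fun i _ => hrow i)
    rw [fcoc_inl0_inl1]
    have he : flipCount (a : Equiv.Perm (Fin n × Bool)) % 2 = 0 :=
      Nat.even_iff.mp (hD _ a.2)
    omega
  have hrow0 : Fcoc G (Sum.inl 0) a (Sum.inl 0) = ∑ i' ∈ I', Fcoc G i' a (Sum.inl 0) := by
    have h : ∀ i' ∈ I', Fcoc G i' a (Sum.inl 0) = 0 := by
      intro i' hi'
      obtain ⟨j, rfl⟩ := hmem i' hi'
      rw [Fcoc_apply]; simp [PhiP, stdBasis]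
    rw [Finset.sum_congr rfl h, Fcoc_apply]
    simp [PhiP, stdBasis]
  funext r
  have hv : (PhiL (a : Equiv.Perm (Fin n × Bool)) (∑ i' ∈ I', stdBasis i')
      - ∑ i' ∈ I', stdBasis i') r = ∑ i' ∈ I', Fcoc G i' a r := by
    rw [Pi.sub_apply, map_sum, Finset.sum_apply, Finset.sum_apply, ← Finset.sum_sub_distrib]
    exact Finset.sum_congr rfl (fun i' _ => rfl)
  rw [hv]
  have h := hsum r
  have heq : Fcoc G (Sum.inl 0) a r = ∑ i' ∈ I', Fcoc G i' a r := by
    rcases r with (c | i)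
    · fin_cases c
      · exact hrow0
      · exact hrow1
    · exact hrow i
  linarith [h, heq]
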